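/- Let E be a monotonically complete Banach lattice with the Fatou property and (T_i)_{i∈I} a mutually commuting family of positive linear contractions on E with common fixed space F. If G ⊆ F has a supremum g_E ≥ 0 in E, then the supremum g_F of G within F satisfies ‖g_F‖ = ‖g_E‖. -/

import Mathlib

/-!
The inequality `‖gE‖ ≤ ‖gF‖` is solidity of the norm, since `0 ≤ gE ≤ gF`. For the converse,
`gE` is sub-invariant (`gE ≤ T i gE`, as `T i gE` bounds `G`), and Zorn's lemma applied to the
sub-invariant `x ≥ gE` with `‖x‖ ≤ ‖gE‖` yields a maximal element `m`: chains have suprema in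
this set by monotone completeness and the Fatou property, and `T i m` again lies in it because
the `T j` commute with `T i` and are contractions. Maximality forces `m` to be a common fixed
point above `G`, hence `0 ≤ gF ≤ m` and `‖gF‖ ≤ ‖m‖ ≤ ‖gE‖`.
-/

def IsMonotonicallyComplete (E : Type*) [Norm E] [Zero E] [Preorder E] : Prop :=
  ∀ D : Set E, D.Nonempty → DirectedOn (· ≤ ·) D → (∀ x ∈ D, 0 ≤ x) →
    (∃ C : ℝ, ∀ x ∈ D, ‖x‖ ≤ C) → ∃ b : E, IsLUB D b

def HasFatouProperty (E : Type*) [Norm E] [Zero E] [Preorder E] : Prop :=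
  ∀ (D : Set E) (b : E), D.Nonempty → DirectedOn (· ≤ ·) D →
    (∀ x ∈ D, 0 ≤ x) → IsLUB D b → ‖b‖ = ⨆ x : D, ‖(x : E)‖

section FixedPoint

variable {E : Type*} [Norm E] [Zero E]

theorem HasFatouProperty.exists_isLUB_norm_le [Preorder E] (hmc : IsMonotonicallyComplete E)
    (hfatou : HasFatouProperty E) {c : Set E} (hne : c.Nonempty) (hc : IsChain (· ≤ ·) c)
    (hc₀ : ∀ x ∈ c, 0 ≤ x) {r : ℝ} (hr : ∀ x ∈ c, ‖x‖ ≤ r) :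
    ∃ b, IsLUB c b ∧ ‖b‖ ≤ r := by
  obtain ⟨b, hb⟩ := hmc c hne hc.directedOn hc₀ ⟨r, hr⟩
  have := hne.to_subtype
  exact ⟨b, hb, (hfatou c b hne hc.directedOn hc₀ hb).trans_le (ciSup_le fun x => hr x x.2)⟩

theorem exists_ge_norm_le_isFixedPt_of_le_apply [PartialOrder E]
    (hmc : IsMonotonicallyComplete E) (hfatou : HasFatouProperty E)
    {I : Type*} (T : I → E → E) (hmono : ∀ i, Monotone (T i))
    (hnorm : ∀ i x, ‖T i x‖ ≤ ‖x‖) (hcomm : ∀ i j, Function.Commute (T i) (T j))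
    {x₀ : E} (hx₀ : 0 ≤ x₀) (hsub : ∀ i, x₀ ≤ T i x₀) :
    ∃ m, x₀ ≤ m ∧ ‖m‖ ≤ ‖x₀‖ ∧ ∀ i, Function.IsFixedPt (T i) m := by
  set s : Set E := {x | x₀ ≤ x ∧ ‖x‖ ≤ ‖x₀‖ ∧ ∀ i, x ≤ T i x}
  have hchain : ∀ c ⊆ s, IsChain (· ≤ ·) c → ∀ y ∈ c, ∃ ub ∈ s, ∀ z ∈ c, z ≤ ub := by
    intro c hcs hc y hy
    obtain ⟨b, hb, hbr⟩ := hfatou.exists_isLUB_norm_le hmc ⟨y, hy⟩ hc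
      (fun x hx => hx₀.trans (hcs hx).1) (fun x hx => (hcs hx).2.1)
    have hbT : ∀ i, b ≤ T i b := fun i =>
      hb.2 fun z hz => ((hcs hz).2.2 i).trans (hmono i (hb.1 hz))
    exact ⟨b, ⟨(hcs hy).1.trans (hb.1 hy), hbr, hbT⟩, fun z hz => hb.1 hz⟩
  obtain ⟨m, -, hm⟩ := zorn_le_nonempty₀ s hchain x₀ ⟨le_rfl, le_rfl, hsub⟩
  obtain ⟨hx₀m, hmx₀, hmT⟩ := hm.prop
  refine ⟨m, hx₀m, hmx₀, fun i => ?_⟩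
  have hTm : T i m ∈ s :=
    ⟨hx₀m.trans (hmT i), (hnorm i m).trans hmx₀,
      fun j => (hmono i (hmT j)).trans_eq (hcomm j i m).symm⟩
  exact hm.eq_of_ge hTm (hmT i)

end FixedPoint

theorem HasSolidNorm.norm_le_norm_of_nonneg_of_le {E : Type*} [NormedAddCommGroup E] [Lattice E]
    [IsOrderedAddMonoid E] [HasSolidNorm E] {a b : E} (ha : 0 ≤ a) (hab : a ≤ b) :
    ‖a‖ ≤ ‖b‖ :=
  norm_le_norm_of_abs_le_abs <| by rwa [abs_of_nonneg ha, abs_of_nonneg (ha.trans hab)]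

theorem norm_sup_in_fixed_space_general
    {E : Type*} [NormedAddCommGroup E] [Lattice E] [HasSolidNorm E] [IsOrderedAddMonoid E] [NormedSpace ℝ E]
    (hmc : ∀ D : Set E, D.Nonempty → DirectedOn (· ≤ ·) D → (∀ x ∈ D, 0 ≤ x) →
      (∃ C : ℝ, ∀ x ∈ D, ‖x‖ ≤ C) → ∃ b : E, IsLUB D b)
    (hfatou : ∀ (D : Set E) (b : E), D.Nonempty → DirectedOn (· ≤ ·) D →
      (∀ x ∈ D, 0 ≤ x) → IsLUB D b → ‖b‖ = ⨆ x : D, ‖(x : E)‖)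
    {I : Type*} (T : I → E →L[ℝ] E)
    (hpos : ∀ i, ∀ x : E, 0 ≤ x → 0 ≤ T i x) (hcontr : ∀ i, ‖T i‖ ≤ 1)
    (hcomm : ∀ i j, (T i).comp (T j) = (T j).comp (T i))
    (G : Set E) (hG : ∀ x ∈ G, ∀ i, T i x = x)
    (gE : E) (hlub : IsLUB G gE) (hgE : 0 ≤ gE)
    (gF : E) (hgF : IsLeast {h : E | (∀ i, T i h = h) ∧ ∀ x ∈ G, x ≤ h} gF) :
    ‖gF‖ = ‖gE‖ := by
  have hmono : ∀ i, Monotone (T i) := fun i => (monotone_iff_map_nonneg (T i)).2 (hpos i)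
  have hgEgF : gE ≤ gF := hlub.2 hgF.1.2
  have hsub : ∀ i, gE ≤ T i gE := fun i =>
    hlub.2 fun x hx => hG x hx i ▸ hmono i (hlub.1 hx)
  obtain ⟨m, hgEm, hmgE, hfix⟩ := exists_ge_norm_le_isFixedPt_of_le_apply hmc hfatou
    (fun i => T i) hmono (fun i x => ((T i).le_of_opNorm_le (hcontr i) x).trans_eq (one_mul _))
    (fun i j x => DFunLike.congr_fun (hcomm i j) x) hgE hsub
  have hgFm : gF ≤ m := hgF.2 ⟨hfix, fun x hx => (hlub.1 hx).trans hgEm⟩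
  exact le_antisymm
    ((HasSolidNorm.norm_le_norm_of_nonneg_of_le (hgE.trans hgEgF) hgFm).trans hmgE)
    (HasSolidNorm.norm_le_norm_of_nonneg_of_le hgE hgEgF)

/-- Main theorem, part (d), second half: if moreover the supremum `gE` of `G` in `E`
is positive, then the supremum `gF` of `G` within the common fixed space `F`
satisfies `‖gF‖ = ‖gE‖`. -/
theorem norm_sup_in_fixed_space
    {E : Type*} [NormedAddCommGroup E] [Lattice E] [HasSolidNorm E] [IsOrderedAddMonoid E] [NormedSpace ℝ E] [CompleteSpace E]
    (hmc : ∀ D : Set E, D.Nonempty → DirectedOn (· ≤ ·) D → (∀ x ∈ D, 0 ≤ x) →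
      (∃ C : ℝ, ∀ x ∈ D, ‖x‖ ≤ C) → ∃ b : E, IsLUB D b)
    (hfatou : ∀ (D : Set E) (b : E), D.Nonempty → DirectedOn (· ≤ ·) D →
      (∀ x ∈ D, 0 ≤ x) → IsLUB D b → ‖b‖ = ⨆ x : D, ‖(x : E)‖)
    {I : Type*} (T : I → E →L[ℝ] E)
    (hpos : ∀ i, ∀ x : E, 0 ≤ x → 0 ≤ T i x) (hcontr : ∀ i, ‖T i‖ ≤ 1)
    (hcomm : ∀ i j, (T i).comp (T j) = (T j).comp (T i))
    (G : Set E) (hG : ∀ x ∈ G, ∀ i, T i x = x)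
    (gE : E) (hlub : IsLUB G gE) (hgE : 0 ≤ gE)
    (gF : E) (hgF : IsLeast {h : E | (∀ i, T i h = h) ∧ ∀ x ∈ G, x ≤ h} gF) :
    ‖gF‖ = ‖gE‖ :=
  norm_sup_in_fixed_space_general hmc hfatou T hpos hcontr hcomm G hG gE hlub hgE gF hgF
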